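/- Let n be even, γ = γ_n as above with z := ᵗσ(γ)w_ℓγ lying in the diagonal split torus and central in L = M_{(n/2,n/2)}. For m ∈ L, the conjugate γ m γ⁻¹ is fixed by θ (θ(g) = w_ℓ⁻¹(ᵗσ(g))⁻¹w_ℓ) if and only if m = (ᵗσ(m))⁻¹. Consequently the fixed-point group (γLγ⁻¹)^θ equals γ·(U × U)·γ⁻¹ where U = {x ∈ GL_{n/2}(E) : ᵗσ(x)·x = 1} is the unitary group of the identity form. -/

import Mathlib

/-!
Writing `z = ᵗσ(γ) w_ℓ γ`, one has `θ(γ M γ⁻¹) = γ · z⁻¹ (ᵗσ(M))⁻¹ z · γ⁻¹`. So when `z`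
commutes with `M`, `γ M γ⁻¹` is `θ`-fixed exactly when `(ᵗσ(M))⁻¹ = M`, i.e. `ᵗσ(M) M = 1`,
and for `M = diag(x, y)` this condition splits into `ᵗσ(x) x = 1` and `ᵗσ(y) y = 1`.
-/

open Matrix

noncomputable section

variable {E : Type*} [Field E]

/-- Conjugate-transpose with respect to the Galois automorphism `σ`. -/
def ctr (σ : E ≃+* E) {n : ℕ} (g : Matrix (Fin n) (Fin n) E) : Matrix (Fin n) (Fin n) E :=
  (g.map ⇑σ)ᵀ

/-- The anti-diagonal permutation matrix `w_ℓ = J_n`. -/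
def wl (E : Type*) [Field E] (n : ℕ) : Matrix (Fin n) (Fin n) E :=
  Matrix.of fun i j => if j = i.rev then 1 else 0

/-- The involution `θ(g) = w_ℓ⁻¹ (ᵗσ(g))⁻¹ w_ℓ`. -/
def theta (σ : E ≃+* E) {n : ℕ} (g : Matrix (Fin n) (Fin n) E) : Matrix (Fin n) (Fin n) E :=
  (wl E n)⁻¹ * (ctr σ g)⁻¹ * wl E n

/-- The block-diagonal matrix `diag(x,y) ∈ M_{2m}(E)` for `x, y ∈ M_m(E)`. -/
def db {m : ℕ} (x y : Matrix (Fin m) (Fin m) E) : Matrix (Fin (m + m)) (Fin (m + m)) E :=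
  Matrix.reindex finSumFinEquiv finSumFinEquiv (Matrix.fromBlocks x 0 0 y)

section Ctr

variable (σ : E ≃+* E) {n : ℕ}

lemma ctr_mul (A B : Matrix (Fin n) (Fin n) E) : ctr σ (A * B) = ctr σ B * ctr σ A := by
  rw [ctr, ctr, ctr, ← Matrix.transpose_mul, ← RingEquiv.mapMatrix_apply, map_mul]
  rfl

lemma ctr_one : ctr σ (1 : Matrix (Fin n) (Fin n) E) = 1 := by
  rw [ctr, Matrix.map_one σ (map_zero σ) (map_one σ), Matrix.transpose_one]

lemma det_ctr (A : Matrix (Fin n) (Fin n) E) : (ctr σ A).det = σ A.det := by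
  rw [ctr, Matrix.det_transpose]
  exact (RingHom.map_det (σ : E →+* E) A).symm

lemma isUnit_det_ctr {A : Matrix (Fin n) (Fin n) E} (hA : IsUnit A.det) :
    IsUnit (ctr σ A).det := by
  rw [det_ctr]
  exact hA.map σ

lemma ctr_nonsing_inv {A : Matrix (Fin n) (Fin n) E} (hA : IsUnit A.det) :
    ctr σ A⁻¹ = (ctr σ A)⁻¹ :=
  (Matrix.inv_eq_right_inv (by rw [← ctr_mul, Matrix.nonsing_inv_mul A hA, ctr_one])).symm

lemma eq_ctr_inv_iff {M : Matrix (Fin n) (Fin n) E} (hM : IsUnit M.det) :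
    M = (ctr σ M)⁻¹ ↔ ctr σ M * M = 1 := by
  refine ⟨fun h => ?_, fun h => (Matrix.inv_eq_right_inv h).symm⟩
  nth_rw 2 [h]
  exact Matrix.mul_nonsing_inv _ (isUnit_det_ctr σ hM)

end Ctr

lemma wl_mul_wl (n : ℕ) : wl E n * wl E n = 1 := by
  ext i j
  rw [Matrix.mul_apply, Finset.sum_eq_single i.rev]
  · simp [wl, Matrix.one_apply, eq_comm]
  · intro k _ hk
    simp [wl, hk]
  · simp

lemma isUnit_det_wl (n : ℕ) : IsUnit (wl E n).det :=
  Matrix.isUnit_det_of_right_inverse (wl_mul_wl n)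

section Conj

variable {n : ℕ}

lemma conj_nonsing_inv_inj {P : Matrix (Fin n) (Fin n) E} (hP : IsUnit P.det)
    {X Y : Matrix (Fin n) (Fin n) E} : P * X * P⁻¹ = P * Y * P⁻¹ ↔ X = Y := by
  refine ⟨fun h => ?_, fun h => h ▸ rfl⟩
  simpa only [mul_assoc, Matrix.nonsing_inv_mul_cancel_left _ _ hP, Matrix.mul_nonsing_inv _ hP,
    Matrix.nonsing_inv_mul _ hP, mul_one] using congrArg (fun Q => P⁻¹ * Q * P) h

lemma nonsing_inv_conj_eq_iff {P : Matrix (Fin n) (Fin n) E} (hP : IsUnit P.det)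
    {X Y : Matrix (Fin n) (Fin n) E} : P⁻¹ * X * P = Y ↔ X = P * Y * P⁻¹ := by
  constructor <;> rintro rfl
  · simp only [mul_assoc, Matrix.mul_nonsing_inv_cancel_left _ _ hP, Matrix.mul_nonsing_inv _ hP,
      mul_one]
  · simp only [mul_assoc, Matrix.nonsing_inv_mul_cancel_left _ _ hP, Matrix.nonsing_inv_mul _ hP,
      mul_one]

variable (σ : E ≃+* E) {γ : Matrix (Fin n) (Fin n) E}

lemma theta_conj (hγ : IsUnit γ.det) (M : Matrix (Fin n) (Fin n) E) :
    theta σ (γ * M * γ⁻¹) =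
      γ * ((ctr σ γ * wl E n * γ)⁻¹ * (ctr σ M)⁻¹ * (ctr σ γ * wl E n * γ)) * γ⁻¹ := by
  rw [theta, ctr_mul, ctr_mul, ctr_nonsing_inv σ hγ, Matrix.mul_inv_rev, Matrix.mul_inv_rev,
    Matrix.nonsing_inv_nonsing_inv _ (isUnit_det_ctr σ hγ), Matrix.mul_inv_rev,
    Matrix.mul_inv_rev]
  simp only [mul_assoc, Matrix.mul_nonsing_inv_cancel_left _ _ hγ, Matrix.mul_nonsing_inv _ hγ,
    mul_one]

lemma theta_conj_eq_self_iff (hγ : IsUnit γ.det) {M : Matrix (Fin n) (Fin n) E}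
    (hz : Commute (ctr σ γ * wl E n * γ) M) :
    theta σ (γ * M * γ⁻¹) = γ * M * γ⁻¹ ↔ M = (ctr σ M)⁻¹ := by
  have hz_det : IsUnit (ctr σ γ * wl E n * γ).det := by
    simpa only [Matrix.det_mul] using ((isUnit_det_ctr σ hγ).mul (isUnit_det_wl n)).mul hγ
  rw [theta_conj σ hγ, conj_nonsing_inv_inj hγ, nonsing_inv_conj_eq_iff hz_det, hz.eq,
    Matrix.mul_nonsing_inv_cancel_right _ _ hz_det, eq_comm]

end Conj

section BlockDiagonal

variable {m : ℕ}

lemma db_one : db (1 : Matrix (Fin m) (Fin m) E) 1 = 1 := by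
  rw [db, Matrix.fromBlocks_one, Matrix.reindex_apply, Matrix.submatrix_one_equiv]

lemma db_mul (x y a b : Matrix (Fin m) (Fin m) E) :
    db x y * db a b = db (x * a) (y * b) := by
  simp [db, Matrix.submatrix_mul_equiv, Matrix.fromBlocks_multiply]

lemma db_inj {x y a b : Matrix (Fin m) (Fin m) E} : db x y = db a b ↔ x = a ∧ y = b := by
  rw [db, db, (Matrix.reindex _ _).injective.eq_iff, Matrix.fromBlocks_inj]
  simp

lemma db_eq_one_iff {x y : Matrix (Fin m) (Fin m) E} : db x y = 1 ↔ x = 1 ∧ y = 1 := by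
  rw [← db_one, db_inj]

lemma ctr_db (σ : E ≃+* E) (x y : Matrix (Fin m) (Fin m) E) :
    ctr σ (db x y) = db (ctr σ x) (ctr σ y) := by
  simp [ctr, db, Matrix.transpose_submatrix, ← Matrix.submatrix_map,
    Matrix.fromBlocks_transpose, Matrix.fromBlocks_map]

lemma isUnit_det_db {x y : Matrix (Fin m) (Fin m) E} (hx : IsUnit x.det) (hy : IsUnit y.det) :
    IsUnit (db x y).det := by
  rw [db, Matrix.det_reindex_self, Matrix.det_fromBlocks_zero₂₁]
  exact hx.mul hy

end BlockDiagonal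

theorem stmt9_general (σ : E ≃+* E) (m : ℕ)
    (γ : Matrix (Fin (m + m)) (Fin (m + m)) E) (hγ : IsUnit γ.det)
    (hz : ∀ x y : Matrix (Fin m) (Fin m) E,
      (ctr σ γ * wl E (m + m) * γ) * db x y = db x y * (ctr σ γ * wl E (m + m) * γ)) :
    (∀ x y : Matrix (Fin m) (Fin m) E, IsUnit x.det → IsUnit y.det →
      (theta σ (γ * db x y * γ⁻¹) = γ * db x y * γ⁻¹ ↔
        db x y = (ctr σ (db x y))⁻¹)) ∧
    (∀ x y : Matrix (Fin m) (Fin m) E, IsUnit x.det → IsUnit y.det →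
      (theta σ (γ * db x y * γ⁻¹) = γ * db x y * γ⁻¹ ↔
        (ctr σ x * x = 1 ∧ ctr σ y * y = 1))) := by
  refine ⟨fun x y _ _ => theta_conj_eq_self_iff σ hγ (hz x y), fun x y hx hy => ?_⟩
  rw [theta_conj_eq_self_iff σ hγ (hz x y), eq_ctr_inv_iff σ (isUnit_det_db hx hy), ctr_db,
    db_mul, db_eq_one_iff]

/-- If `z = ᵗσ(γ)·w_ℓ·γ` is central in the Levi `L = M_{(n/2,n/2)}`, then for
`m ∈ L` the conjugate `γ m γ⁻¹` is `θ`-fixed iff `m = (ᵗσ(m))⁻¹`; consequently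
`(γLγ⁻¹)^θ = γ·(U × U)·γ⁻¹` with `U = {x : ᵗσ(x)·x = 1}` the unitary group of the
identity form. -/
theorem stmt9 (σ : E ≃+* E) (hσ : Function.Involutive ⇑σ) (m : ℕ)
    (γ : Matrix (Fin (m + m)) (Fin (m + m)) E) (hγ : IsUnit γ.det)
    (hz : ∀ x y : Matrix (Fin m) (Fin m) E,
      (ctr σ γ * wl E (m + m) * γ) * db x y = db x y * (ctr σ γ * wl E (m + m) * γ)) :
    (∀ x y : Matrix (Fin m) (Fin m) E, IsUnit x.det → IsUnit y.det →
      (theta σ (γ * db x y * γ⁻¹) = γ * db x y * γ⁻¹ ↔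
        db x y = (ctr σ (db x y))⁻¹)) ∧
    (∀ x y : Matrix (Fin m) (Fin m) E, IsUnit x.det → IsUnit y.det →
      (theta σ (γ * db x y * γ⁻¹) = γ * db x y * γ⁻¹ ↔
        (ctr σ x * x = 1 ∧ ctr σ y * y = 1))) :=
  stmt9_general σ m γ hγ hz
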